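/- arXiv:2002.03320 — 2 statements merged into one kernel-verified Lean document; each statement's English description precedes it below -/
import Mathlib

section
/- Consider the family g_{a,b}(z) = a·tan(z) + b on the upper half-plane ℍ, with a > 0 and b ∈ (−π/2, π/2]. Then: (1) no two different maps g_{a,b} and g_{ã,b̃} with (a,b) ≠ (ã,b̃) are conformally conjugate (by a Möbius automorphism of ℍ); and (2) g_{a,b} has an attracting fixed point in ℍ if and only if a > 1, or a ≤ 1 and |b| > arccos(√a) − √a·√(1 − a). -/
open Complex Filter Set Metric Topology
open scoped ENNReal Real Topology

noncomputable section

/-- The open unit disc in `ℂ`. -/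
def unitDisc : Set ℂ := Metric.ball 0 1

/-- The upper half-plane in `ℂ`. -/
def upperHalf : Set ℂ := {z : ℂ | 0 < z.im}

/-- A transcendental entire function: entire but not a polynomial. -/
def TranscendentalEntire (f : ℂ → ℂ) : Prop :=
  Differentiable ℂ f ∧ ¬ ∃ p : Polynomial ℂ, ∀ z, f z = p.eval z

/-- An inner function of the unit disc: a holomorphic self-map of the disc whose radial
limits exist and have modulus one at almost every boundary point. -/
def IsInner (g : ℂ → ℂ) : Prop :=
  MapsTo g unitDisc unitDisc ∧ DifferentiableOn ℂ g unitDisc ∧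
    ∀ᵐ θ : ℝ ∂MeasureTheory.volume, ∃ c : ℂ, ‖c‖ = 1 ∧
      Tendsto (fun t : ℝ => g ((t : ℂ) * Complex.exp (θ * Complex.I)))
        (nhdsWithin (1 : ℝ) (Set.Iio 1)) (nhds c)

/-- The Blaschke factor with zero `a` (interpreted as `z` when `a = 0`). -/
def blaschkeFactor (a z : ℂ) : ℂ :=
  if a = 0 then z
  else (((‖a‖ : ℝ) : ℂ) / a) * ((a - z) / (1 - (starRingEnd ℂ) a * z))

/-- `g` is a finite Blaschke product of degree `d`. -/
def IsFiniteBlaschke (d : ℕ) (g : ℂ → ℂ) : Prop :=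
  ∃ (θ : ℝ) (a : Fin d → ℂ), (∀ i, ‖a i‖ < 1) ∧
    ∀ z : ℂ, g z = Complex.exp (θ * Complex.I) * ∏ i, blaschkeFactor (a i) z

/-- `g` agrees on the unit disc with an infinite Blaschke product. -/
def IsInfiniteBlaschke (g : ℂ → ℂ) : Prop :=
  ∃ (θ : ℝ) (a : ℕ → ℂ), (∀ n, ‖a n‖ < 1) ∧
    Summable (fun n => 1 - ‖a n‖) ∧
    ∀ z ∈ unitDisc, g z = Complex.exp (θ * Complex.I) * ∏' n, blaschkeFactor (a n) z

/-- A conformal bijection (Riemann map) from `S` onto `U`. -/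
def ConformalBijOn (φ : ℂ → ℂ) (S U : Set ℂ) : Prop :=
  DifferentiableOn ℂ φ S ∧ BijOn φ S U

/-- `g` is an inner function associated to `f : U → V` via Riemann maps `φ, ψ`,
i.e. `g = ψ⁻¹ ∘ f ∘ φ` on the unit disc. -/
def AssociatedInner (f : ℂ → ℂ) (U V : Set ℂ) (g : ℂ → ℂ) : Prop :=
  ∃ φ ψ : ℂ → ℂ, ConformalBijOn φ unitDisc U ∧ ConformalBijOn ψ unitDisc V ∧
    MapsTo g unitDisc unitDisc ∧ DifferentiableOn ℂ g unitDisc ∧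
    ∀ z ∈ unitDisc, ψ (g z) = f (φ z)

/-- `g` is an inner function dynamically associated to `f|_U`, i.e. `g = φ⁻¹ ∘ f ∘ φ`
for a Riemann map `φ : 𝔻 → U`. -/
def DynAssociated (f : ℂ → ℂ) (U : Set ℂ) (g : ℂ → ℂ) : Prop :=
  ∃ φ : ℂ → ℂ, ConformalBijOn φ unitDisc U ∧
    MapsTo g unitDisc unitDisc ∧ DifferentiableOn ℂ g unitDisc ∧
    ∀ z ∈ unitDisc, φ (g z) = f (φ z)

/-- `g : ℍ → ℍ` is dynamically associated to `f|_U` via a Riemann map `φ : ℍ → U`. -/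
def DynAssociatedH (f : ℂ → ℂ) (U : Set ℂ) (g : ℂ → ℂ) : Prop :=
  ∃ φ : ℂ → ℂ, ConformalBijOn φ upperHalf U ∧
    MapsTo g upperHalf upperHalf ∧ DifferentiableOn ℂ g upperHalf ∧
    ∀ z ∈ upperHalf, φ (g z) = f (φ z)

/-- The sequence of maps `F n` tends to infinity uniformly on compact subsets of `W`. -/
def UnifToInfOn (F : ℕ → ℂ → ℂ) (W : Set ℂ) : Prop :=
  ∀ K, K ⊆ W → IsCompact K → ∀ M : ℝ, ∀ᶠ n in atTop, ∀ z ∈ K, M ≤ ‖F n z‖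

/-- The family `F` is normal on `W`: every subsequence has a further subsequence that
converges locally uniformly on `W`, or diverges to infinity uniformly on compact sets. -/
def NormalOn (F : ℕ → ℂ → ℂ) (W : Set ℂ) : Prop :=
  ∀ s : ℕ → ℕ, StrictMono s → ∃ t : ℕ → ℕ, StrictMono t ∧
    ((∃ h : ℂ → ℂ, TendstoLocallyUniformlyOn (fun k => F (s (t k))) h atTop W) ∨
      UnifToInfOn (fun k => F (s (t k))) W)

/-- The Fatou set of an entire function. -/
def FatouSet (f : ℂ → ℂ) : Set ℂ :=
  {z | ∃ W : Set ℂ, IsOpen W ∧ z ∈ W ∧ NormalOn (fun n => f^[n]) W}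

/-- `U` is a Fatou component (connected component of the Fatou set) of `f`. -/
def IsFatouComponent (f : ℂ → ℂ) (U : Set ℂ) : Prop :=
  ∃ z ∈ FatouSet f, U = connectedComponentIn (FatouSet f) z

/-- The set of singular values of `f`: the closure of the set of critical values
together with the finite asymptotic values. -/
def SingularValues (f : ℂ → ℂ) : Set ℂ :=
  closure ({v | ∃ z : ℂ, deriv f z = 0 ∧ f z = v} ∪
    {v | ∃ γ : ℝ → ℂ, ContinuousOn γ (Set.Ici 0) ∧
      Tendsto (fun t => ‖γ t‖) atTop atTop ∧
      Tendsto (fun t => f (γ t)) atTop (nhds v)})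

/-- `ζ` is a singularity of the inner function `g`: a boundary point of the disc at which
`g` admits no holomorphic extension to a neighbourhood. -/
def IsBoundarySingularity (g : ℂ → ℂ) (ζ : ℂ) : Prop :=
  ζ ∈ Metric.sphere (0 : ℂ) 1 ∧
  ¬ ∃ (W : Set ℂ) (h : ℂ → ℂ), IsOpen W ∧ ζ ∈ W ∧ DifferentiableOn ℂ h W ∧
      Set.EqOn g h (W ∩ unitDisc)

/-- `C` is a connected component of the set `A`. -/
def IsCompOf (A C : Set ℂ) : Prop := ∃ z ∈ A, C = connectedComponentIn A z

/-- A Jordan domain: a bounded domain whose boundary is a Jordan curve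
(a homeomorphic copy of the circle). -/
def IsJordanDomain (D : Set ℂ) : Prop :=
  IsOpen D ∧ IsConnected D ∧ Bornology.IsBounded D ∧
  Nonempty (↥(Metric.sphere (0 : ℂ) 1) ≃ₜ ↥(frontier D))

/-- The multiplicity of `z` as a solution of `f w = f z`: the order of vanishing
of `f - f z` at `z` (as a value in `ℝ≥0∞`, `⊤` if `f` is locally constant). -/
def multAt (f : ℂ → ℂ) (z : ℂ) : ℝ≥0∞ :=
  sInf {x : ℝ≥0∞ | ∃ m : ℕ, x = m ∧ 1 ≤ m ∧ iteratedDeriv m f z ≠ 0}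

/-- The number of solutions of `f z = v` with `z ∈ U`, counted with multiplicity. -/
def ValenceAt (f : ℂ → ℂ) (U : Set ℂ) (v : ℂ) : ℝ≥0∞ :=
  ∑' z : ↥(U ∩ f ⁻¹' {v}), multAt f ↑z

/-- `f : U → V` has infinite valence: every value in `V`, with at most one exception,
has infinitely many preimages in `U`. -/
def InfValence (f : ℂ → ℂ) (U V : Set ℂ) : Prop :=
  ∃ E : Set ℂ, E.Subsingleton ∧ ∀ v ∈ V \ E, (U ∩ f ⁻¹' {v}).Infinite




/-- `U` is an invariant attracting Fatou component of `f`. -/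
def IsAttractingComponent (f : ℂ → ℂ) (U : Set ℂ) : Prop :=
  IsFatouComponent f U ∧ Set.MapsTo f U U ∧
  ∃ z₀ ∈ U, f z₀ = z₀ ∧ ‖deriv f z₀‖ < 1 ∧
    ∀ z ∈ U, Tendsto (fun n => f^[n] z) atTop (nhds z₀)

/-- `U` is an invariant super-attracting Fatou component of `f`. -/
def IsSuperAttractingComponent (f : ℂ → ℂ) (U : Set ℂ) : Prop :=
  IsFatouComponent f U ∧ Set.MapsTo f U U ∧
  ∃ z₀ ∈ U, f z₀ = z₀ ∧ deriv f z₀ = 0 ∧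
    ∀ z ∈ U, Tendsto (fun n => f^[n] z) atTop (nhds z₀)

/-- `U` is an invariant parabolic Fatou component of `f`. -/
def IsParabolicComponent (f : ℂ → ℂ) (U : Set ℂ) : Prop :=
  IsFatouComponent f U ∧ Set.MapsTo f U U ∧
  ∃ p ∈ frontier U, f p = p ∧ deriv f p = 1 ∧
    TendstoLocallyUniformlyOn (fun n => f^[n]) (fun _ => p) atTop U

/-- `U` is a wandering domain of `f`. -/
def IsWanderingDomain (f : ℂ → ℂ) (U : Set ℂ) : Prop :=
  IsFatouComponent f U ∧ ∀ m n : ℕ, m ≠ n → Disjoint (f^[m] '' U) (f^[n] '' U)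

/-- `f : U → V` is a proper map of degree `d`: preimages of compact sets are compact and
every value is assumed exactly `d` times counting multiplicity. -/
def ProperOfDegree (f : ℂ → ℂ) (U V : Set ℂ) (d : ℕ) : Prop :=
  Set.MapsTo f U V ∧ (∀ K, K ⊆ V → IsCompact K → IsCompact (U ∩ f ⁻¹' K)) ∧
  ∀ v ∈ V, ValenceAt f U v = (d : ℝ≥0∞)

/-- `g` has an attracting fixed point in the unit disc. -/
def HasAttractingFP (g : ℂ → ℂ) : Prop :=
  ∃ z₀ ∈ unitDisc, g z₀ = z₀ ∧ ‖deriv g z₀‖ < 1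

/-- `g` has a triple fixed point on the unit circle: a boundary point at which
`g z - z` has a zero of order exactly `3`. -/
def HasTripleFPOnCircle (g : ℂ → ℂ) : Prop :=
  ∃ ζ ∈ Metric.sphere (0 : ℂ) 1, g ζ = ζ ∧
    iteratedDeriv 1 (fun z => g z - z) ζ = 0 ∧
    iteratedDeriv 2 (fun z => g z - z) ζ = 0 ∧
    iteratedDeriv 3 (fun z => g z - z) ζ ≠ 0

/-- The map `g_{a,b}(z) = a·tan z + b` on the upper half-plane. -/
def gab (a b : ℝ) : ℂ → ℂ := fun z => (a : ℂ) * Complex.tan z + (b : ℂ)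

/-- A Möbius automorphism of the unit disc. -/
def MobiusDisc (m : ℂ → ℂ) : Prop :=
  ∃ (θ : ℝ) (a : ℂ), ‖a‖ < 1 ∧
    ∀ z ∈ unitDisc, m z = Complex.exp (θ * Complex.I) * (z - a) / (1 - (starRingEnd ℂ) a * z)

/-- A Möbius automorphism of the upper half-plane. -/
def MobiusH (ψ : ℂ → ℂ) : Prop :=
  ∃ p q r s : ℝ, 0 < p * s - q * r ∧
    ∀ z ∈ upperHalf, ψ z = ((p : ℂ) * z + (q : ℂ)) / ((r : ℂ) * z + (s : ℂ))

/-- The Cayley transform `ℍ → 𝔻`. -/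
def cayley (z : ℂ) : ℂ := (z - Complex.I) / (z + Complex.I)

/-- The inverse Cayley transform `𝔻 → ℍ`. -/
def cayleyInv (w : ℂ) : ℂ := Complex.I * (1 + w) / (1 - w)


/-- An inner function of the upper half-plane: a holomorphic self-map of `ℍ`
corresponding to an inner function of the disc under the Cayley transform. -/
def IsInnerH (g : ℂ → ℂ) : Prop :=
  Set.MapsTo g upperHalf upperHalf ∧ DifferentiableOn ℂ g upperHalf ∧
  IsInner (fun w => cayley (g (cayleyInv w)))

/-- Curves tending to infinity within `W`. -/
def CurveToInf (W : Set ℂ) : Type :=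
  {γ : ℝ → ℂ // ContinuousOn γ (Set.Ici 0) ∧ (∀ t ∈ Set.Ici (0 : ℝ), γ t ∈ W) ∧
    Tendsto (fun t => ‖γ t‖) atTop atTop}

/-- Two curves to infinity in `W` are homotopic through curves to infinity in `W`. -/
def accessRel (W : Set ℂ) (γ₀ γ₁ : CurveToInf W) : Prop :=
  ∃ H : ℝ → ℝ → ℂ,
    ContinuousOn (fun p : ℝ × ℝ => H p.1 p.2) (Set.Ici 0 ×ˢ Set.Icc 0 1) ∧
    (∀ t ∈ Set.Ici (0 : ℝ), ∀ s ∈ Set.Icc (0 : ℝ) 1, H t s ∈ W) ∧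
    (∀ t ∈ Set.Ici (0 : ℝ), H t 0 = γ₀.1 t ∧ H t 1 = γ₁.1 t) ∧
    (∀ s ∈ Set.Icc (0 : ℝ) 1, Tendsto (fun t => ‖H t s‖) atTop atTop)

/-- The accesses to infinity in `W`: homotopy classes of curves to infinity in `W`. -/
def Accesses (W : Set ℂ) := Quot (accessRel W)

/-- Quasisymmetric conjugacy on the unit circle: a quasisymmetric circle homeomorphism
`θ` (with lift `Θ`) with `θ ∘ g = g' ∘ θ` on the circle. -/
def QSConjOnCircle (g g' : ℂ → ℂ) : Prop :=
  ∃ (θ : ℂ → ℂ) (Θ : ℝ → ℝ) (M : ℝ), 1 ≤ M ∧ Continuous Θ ∧ StrictMono Θ ∧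
    (∀ t, Θ (t + 2 * Real.pi) = Θ t + 2 * Real.pi) ∧
    (∀ t : ℝ, θ (Complex.exp ((t : ℂ) * Complex.I)) = Complex.exp ((Θ t : ℂ) * Complex.I)) ∧
    (∀ t h : ℝ, 0 < h →
      Θ (t + h) - Θ t ≤ M * (Θ t - Θ (t - h)) ∧
      Θ t - Θ (t - h) ≤ M * (Θ (t + h) - Θ t)) ∧
    (∀ z ∈ Metric.sphere (0 : ℂ) 1, θ (g z) = g' (θ z))

/-- `g` restricted to `Dom` is an (unbranched) covering over every point of
`Dom` other than `s`. -/
def CoveringOverPuncture (g : ℂ → ℂ) (Dom : Set ℂ) (s : ℂ) : Prop :=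
  ∀ v ∈ Dom, v ≠ s → ∃ W : Set ℂ, IsOpen W ∧ v ∈ W ∧ W ⊆ Dom \ {s} ∧
    ∃ (ι : Type) (Ω : ι → Set ℂ), (∀ i, IsOpen (Ω i)) ∧
      (Pairwise fun i j => Disjoint (Ω i) (Ω j)) ∧
      (Dom ∩ g ⁻¹' W = ⋃ i, Ω i) ∧ ∀ i, Set.BijOn g (Ω i) W

/-- `g` has the single singular value `s` in `Dom`: `g` is a covering away from `s`. -/
def UniqueSingularValue (g : ℂ → ℂ) (Dom : Set ℂ) (s : ℂ) : Prop :=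
  s ∈ Dom ∧ CoveringOverPuncture g Dom s

/-- `g : Dom → Dom` has degree `d ∈ ℕ∞`: if `d` is finite, every value is taken exactly
`d` times with multiplicity; if `d = ∞`, every value with at most one exception has
infinitely many preimages. -/
def DegreeEq (g : ℂ → ℂ) (Dom : Set ℂ) (d : ℕ∞) : Prop :=
  (∃ n : ℕ, d = (n : ℕ∞) ∧ ∀ v ∈ Dom, ValenceAt g Dom v = (n : ℝ≥0∞)) ∨
  (d = ⊤ ∧ ∃ E : Set ℂ, E.Subsingleton ∧ ∀ v ∈ Dom \ E, (Dom ∩ g ⁻¹' {v}).Infinite)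

end

/-!
Write a point of `ℍ` as `w = (u + t i) / 2`. The identity
`tan (x + y i) = (sin 2x + i sinh 2y) / (cos 2x + cosh 2y)` turns `g_{a,b}(w) = w` into
`cos u = 2a sinh t / t - cosh t` and `2b = u - (t / sinh t) sin u`, and gives
`|g_{a,b}'(w)| = t / sinh t < 1` there, so every fixed point in `ℍ` is attracting. If `a ≤ 1`,
then `2a sinh t / t - cosh t < 2a - 1 = cos σ` with `σ = 2 arccos √a`, so `|u| > σ` and
`2|b| > σ - sin σ`, which is twice the threshold `arccos √a - √a √(1 - a)`. Conversely, as `t`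
runs from `0⁺` to a point where `2a sinh t / t - cosh t = -1`, the value of `2b` obtained with
`u = arccos (2a sinh t / t - cosh t)` runs from `σ - sin σ` (from `0` if `a > 1`) up to `π`, and
the intermediate value theorem yields the fixed point.

A conjugacy `ψ` from `g_{a,b}` to `g_{a',b'}` satisfies `tan ψ(z + π) = tan ψ(z)`, so
`ψ(z + π) - ψ(z)` is a nonzero multiple of `π`; for a non-affine Möbius map this difference is
small high up in `ℍ`. Hence `ψ(z) = λz + μ`. Letting `Im z → ∞`, where `tan z → i`, gives
`a' = λa` and `b' = λb + μ`; then `tan (λi + μ) = tan i` forces `λ = 1` and `μ ∈ πℤ`, so `b = b'`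
because `|b - b'| < π`.
-/

namespace Real

lemma sinh_lt_mul_cosh {t : ℝ} (ht : 0 < t) : sinh t < t * cosh t := by
  have hmono : StrictMonoOn (fun s => s * cosh s - sinh s) (Ici 0) := by
    refine strictMonoOn_of_deriv_pos (convex_Ici 0) (by fun_prop) fun s hs => ?_
    rw [interior_Ici] at hs
    have hd : HasDerivAt (fun s => s * cosh s - sinh s) (s * sinh s) s := by
      have h : HasDerivAt (fun s => s * cosh s - sinh s) (1 * cosh s + s * sinh s - cosh s) s :=
        ((hasDerivAt_id' s).mul (hasDerivAt_cosh s)).sub (hasDerivAt_sinh s)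
      convert h using 1
      ring
    rw [hd.deriv]
    exact mul_pos hs (sinh_pos_iff.2 hs)
  simpa using hmono self_mem_Ici ht.le ht

lemma two_mul_sinh_lt {t : ℝ} (ht : 0 < t) : 2 * sinh t < t * (cosh t + 1) := by
  have hsinh : sinh t = 2 * sinh (t / 2) * cosh (t / 2) := by rw [← sinh_two_mul]; ring_nf
  have hcosh : cosh t = cosh (t / 2) ^ 2 + sinh (t / 2) ^ 2 := by rw [← cosh_two_mul]; ring_nf
  have := sinh_lt_mul_cosh (half_pos ht)
  nlinarith [cosh_pos (t / 2), cosh_sq_sub_sinh_sq (t / 2)]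

lemma tendsto_sinh_div_self : Tendsto (fun t => sinh t / t) (𝓝[≠] 0) (𝓝 1) := by
  simpa [slope_fun_def_field] using hasDerivAt_iff_tendsto_slope.1 (hasDerivAt_sinh 0)

lemma tendsto_sinh_div_self_nhdsGT : Tendsto (fun t => sinh t / t) (𝓝[>] 0) (𝓝 1) :=
  tendsto_sinh_div_self.mono_left (nhdsWithin_mono _ fun _ ht => ne_of_gt ht)

lemma sub_sin_lt_sub_mul_sin {σ v l : ℝ} (hσ : 0 ≤ σ) (hσπ : σ ≤ π) (hσv : σ < v)
    (hl : 0 ≤ l) (hl1 : l < 1) : σ - sin σ < v - l * sin v := by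
  have hlip : sin v - sin σ ≤ v - σ := (le_abs_self _).trans
    ((abs_sin_sub_sin_le v σ).trans (abs_of_pos (sub_pos.2 hσv)).le)
  have hsσ : 0 ≤ sin σ := sin_nonneg_of_nonneg_of_le_pi hσ hσπ
  nlinarith [mul_le_mul_of_nonneg_left hlip hl]

lemma arccos_two_mul_sub_one {a : ℝ} (ha : 0 ≤ a) (ha1 : a ≤ 1) :
    arccos (2 * a - 1) = 2 * arccos √a := by
  have hcos : cos (2 * arccos √a) = 2 * a - 1 := by
    rw [cos_two_mul, cos_arccos (by linarith [sqrt_nonneg a]) (sqrt_le_one.2 ha1), sq_sqrt ha]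
  rw [← hcos, arccos_cos (by linarith [arccos_nonneg √a])]
  linarith [arccos_le_pi_div_two.2 (sqrt_nonneg a)]

lemma two_mul_arccos_sqrt_sub {a : ℝ} (ha : 0 ≤ a) (ha1 : a ≤ 1) :
    2 * (arccos √a - √a * √(1 - a)) = arccos (2 * a - 1) - sin (arccos (2 * a - 1)) := by
  rw [arccos_two_mul_sub_one ha ha1, sin_two_mul, sin_arccos, sq_sqrt ha,
    cos_arccos (by linarith [sqrt_nonneg a]) (sqrt_le_one.2 ha1)]
  ring

lemma cos_add_cosh_pos (x : ℝ) {y : ℝ} (hy : y ≠ 0) : 0 < cos x + cosh y := by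
  linarith [one_lt_cosh.2 hy, neg_one_le_cos x]

end Real

namespace Complex

lemma sin_mul_cos_conj (x y : ℝ) :
    sin (x + y * I) * cos (x - y * I) = ((Real.sin (2 * x) : ℂ) + Real.sinh (2 * y) * I) / 2 := by
  have hsum : sin (2 * x) =
      sin (x + y * I) * cos (x - y * I) + cos (x + y * I) * sin (x - y * I) := by
    rw [← sin_add]; congr 1; ring
  have hdiff : sinh (2 * y) * I =
      sin (x + y * I) * cos (x - y * I) - cos (x + y * I) * sin (x - y * I) := by
    rw [← sin_sub, ← sin_mul_I]; congr 1; ring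
  push_cast
  linear_combination -(hsum + hdiff) / 2

lemma cos_mul_cos_conj (x y : ℝ) :
    cos (x + y * I) * cos (x - y * I) = ((Real.cos (2 * x) + Real.cosh (2 * y)) / 2 : ℝ) := by
  have hsum : cos (2 * x) =
      cos (x + y * I) * cos (x - y * I) - sin (x + y * I) * sin (x - y * I) := by
    rw [← cos_add]; congr 1; ring
  have hdiff : cosh (2 * y) =
      cos (x + y * I) * cos (x - y * I) + sin (x + y * I) * sin (x - y * I) := by
    rw [← cos_sub, ← cos_mul_I]; congr 1; ring
  push_cast
  linear_combination -(hsum + hdiff) / 2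

lemma cos_sub_mul_I_eq_conj (x y : ℝ) :
    cos (x - y * I) = (starRingEnd ℂ) (cos (x + y * I)) := by
  rw [← cos_conj]; simp [sub_eq_add_neg]

lemma tan_add_mul_I_eq_div (x y : ℝ) :
    tan (x + y * I) = ((Real.sin (2 * x) : ℂ) + Real.sinh (2 * y) * I) /
      ((Real.cos (2 * x) + Real.cosh (2 * y) : ℝ) : ℂ) := by
  have hden : ((Real.cos (2 * x) + Real.cosh (2 * y) : ℝ) : ℂ) =
      2 * (cos (x + y * I) * cos (x - y * I)) := by
    rw [cos_mul_cos_conj]; push_cast; ring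
  rcases eq_or_ne (cos (x + y * I)) 0 with h | h
  · rw [tan_eq_zero_of_cos_eq_zero h, hden, h, zero_mul, mul_zero, div_zero]
  · have hc : cos (x - y * I) ≠ 0 := by rwa [cos_sub_mul_I_eq_conj, map_ne_zero]
    rw [tan_eq_sin_div_cos, ← mul_div_mul_right _ _ hc, sin_mul_cos_conj, hden]
    field_simp

lemma norm_cos_add_mul_I_sq (x y : ℝ) :
    ‖cos (x + y * I)‖ ^ 2 = (Real.cos (2 * x) + Real.cosh (2 * y)) / 2 := by
  rw [← ofReal_inj, ← cos_mul_cos_conj, cos_sub_mul_I_eq_conj, mul_conj', ofReal_pow]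

lemma cos_ne_zero_of_im_ne_zero {z : ℂ} (hz : z.im ≠ 0) : cos z ≠ 0 := by
  intro h
  have := norm_cos_add_mul_I_sq z.re z.im
  rw [re_add_im, h, norm_zero] at this
  linarith [Real.cos_add_cosh_pos (2 * z.re) (mul_ne_zero two_ne_zero hz)]

lemma exists_sub_eq_int_mul_pi_of_tan_eq {u v : ℂ} (hu : u.im ≠ 0) (hv : v.im ≠ 0)
    (h : tan u = tan v) : ∃ k : ℤ, u - v = k * π := by
  rw [tan_eq_sin_div_cos, tan_eq_sin_div_cos,
    div_eq_div_iff (cos_ne_zero_of_im_ne_zero hu) (cos_ne_zero_of_im_ne_zero hv)] at h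
  exact sin_eq_zero_iff.1 (by rw [sin_sub]; linear_combination h)

lemma im_tan_pos {z : ℂ} (hz : 0 < z.im) : 0 < (tan z).im := by
  rw [← re_add_im z, tan_add_mul_I_eq_div, div_ofReal_im]
  simp only [add_im, ofReal_im, mul_im, ofReal_re, I_re, I_im, mul_zero, mul_one, zero_add,
    add_zero]
  exact div_pos (Real.sinh_pos_iff.2 (by positivity))
    (Real.cos_add_cosh_pos _ (mul_ne_zero two_ne_zero hz.ne'))

lemma tan_eq_I_mul_div (z : ℂ) : tan z = I * (1 - exp (2 * z * I)) / (1 + exp (2 * z * I)) := by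
  have hsq : exp (2 * z * I) = exp (z * I) * exp (z * I) := by rw [← exp_add]; ring_nf
  have hinv : exp (-z * I) * exp (z * I) = 1 := by rw [← exp_add]; simp
  have hs : sin z * (2 * exp (z * I)) = I * (1 - exp (2 * z * I)) := by
    rw [sin, hsq]; linear_combination I * hinv
  have hc : cos z * (2 * exp (z * I)) = 1 + exp (2 * z * I) := by
    rw [cos, hsq]; linear_combination hinv
  rw [tan_eq_sin_div_cos, ← mul_div_mul_right _ _ (mul_ne_zero two_ne_zero (exp_ne_zero _)), hs,
    hc]

instance comap_im_atTop_neBot : (comap im atTop).NeBot :=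
  comap_neBot fun t ht => by
    obtain ⟨y, hy⟩ := mem_atTop_sets.1 ht
    exact ⟨y * I, by simpa using hy y le_rfl⟩

lemma tendsto_tan_comap_im_atTop : Tendsto tan (comap im atTop) (𝓝 I) := by
  have hexp : Tendsto (fun z => exp (2 * z * I)) (comap im atTop) (𝓝 0) := by
    rw [tendsto_zero_iff_norm_tendsto_zero]
    simp only [norm_exp, mul_I_re, mul_im, re_ofNat, im_ofNat, zero_mul, add_zero]
    exact Real.tendsto_exp_atBot.comp
      (tendsto_neg_atTop_atBot.comp (tendsto_comap.const_mul_atTop two_pos))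
  have := ((tendsto_const_nhds (x := (1 : ℂ)).sub hexp).const_mul I).div
    (tendsto_const_nhds (x := (1 : ℂ)).add hexp) (by simp)
  rw [funext tan_eq_I_mul_div]
  convert this using 2 <;> simp

end Complex


lemma mapsTo_gab {a : ℝ} (ha : 0 < a) (b : ℝ) : MapsTo (gab a b) upperHalf upperHalf := by
  intro z hz
  change 0 < (gab a b z).im
  simpa [gab] using mul_pos ha (im_tan_pos hz)

/-- The equation `gab a b w = w` at `w = (u + t i) / 2`, with denominators cleared. -/
def GabFixedEqn (a b u t : ℝ) : Prop :=
  2 * a * Real.sinh t = t * (Real.cos u + Real.cosh t) ∧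
    2 * a * Real.sin u = (u - 2 * b) * (Real.cos u + Real.cosh t)

lemma gab_eq_self_iff {a b x y : ℝ} (hy : y ≠ 0) :
    gab a b (x + y * I) = x + y * I ↔ GabFixedEqn a b (2 * x) (2 * y) := by
  have hN := Real.cos_add_cosh_pos (2 * x) (mul_ne_zero two_ne_zero hy)
  rw [gab, tan_add_mul_I_eq_div, Complex.ext_iff, GabFixedEqn]
  simp only [add_re, add_im, mul_re, mul_im, ofReal_re, ofReal_im, div_ofReal_re, div_ofReal_im,
    I_re, I_im]
  simp only [mul_zero, sub_zero, mul_one, zero_mul, zero_div, add_zero, zero_add, ← mul_div_assoc]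
  rw [div_add' _ _ _ hN.ne', div_eq_iff hN.ne', div_eq_iff hN.ne']
  constructor <;> rintro ⟨h₁, h₂⟩ <;> constructor <;> linarith

lemma GabFixedEqn.neg {a b u t : ℝ} (h : GabFixedEqn a b u t) : GabFixedEqn a (-b) (-u) t := by
  obtain ⟨h₁, h₂⟩ := h
  refine ⟨by rwa [Real.cos_neg], ?_⟩
  rw [Real.cos_neg, Real.sin_neg]
  linarith

lemma norm_deriv_gab_lt_one {a b : ℝ} (ha : 0 < a) {w : ℂ} (hw : 0 < w.im)
    (hfix : gab a b w = w) : ‖deriv (gab a b) w‖ < 1 := by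
  rw [← re_add_im w] at hfix
  obtain ⟨h, -⟩ := (gab_eq_self_iff hw.ne').1 hfix
  have hN := Real.cos_add_cosh_pos (2 * w.re) (mul_ne_zero two_ne_zero hw.ne')
  have hcos : ‖cos w‖ ^ 2 = (Real.cos (2 * w.re) + Real.cosh (2 * w.im)) / 2 := by
    rw [← norm_cos_add_mul_I_sq, re_add_im]
  have hc0 : cos w ≠ 0 := by
    intro h0
    rw [h0, norm_zero] at hcos
    linarith
  have hd : HasDerivAt (gab a b) (a * (1 / cos w ^ 2)) w :=
    ((hasDerivAt_tan hc0).const_mul _).add_const _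
  have hsinh := Real.self_lt_sinh_iff.2 (by positivity : 0 < 2 * w.im)
  rw [hd.deriv, norm_mul, norm_div, norm_one, norm_pow, hcos, norm_real, Real.norm_of_nonneg ha.le,
    mul_one_div, div_lt_one (by positivity)]
  nlinarith

lemma lt_of_gabFixedEqn {a b u t : ℝ} (ha : 0 < a) (ha1 : a ≤ 1) (ht : 0 < t) (hu : 0 ≤ u)
    (h : GabFixedEqn a b u t) : Real.arccos √a - √a * √(1 - a) < b := by
  obtain ⟨h₁, h₂⟩ := h
  have hsinh : t < Real.sinh t := Real.self_lt_sinh_iff.2 ht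
  have hcos : Real.cos u < 2 * a - 1 := by
    have h2sinh := Real.two_mul_sinh_lt ht
    have : t * Real.cos u < t * (2 * a - 1) := by
      nlinarith [mul_le_mul_of_nonneg_right ha1 (sub_pos.2 hsinh).le]
    exact lt_of_mul_lt_mul_left this ht.le
  have hσu : Real.arccos (2 * a - 1) < u := by
    by_contra! hle
    have := Real.cos_le_cos_of_nonneg_of_le_pi hu (Real.arccos_le_pi _) hle
    rw [Real.cos_arccos (by linarith) (by linarith)] at this
    linarith
  have hb : 2 * b = u - t / Real.sinh t * Real.sin u := by
    have e : 2 * a * ((u - 2 * b) * Real.sinh t - t * Real.sin u) = 0 := by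
      linear_combination (u - 2 * b) * h₁ - t * h₂
    have e' := (mul_eq_zero.1 e).resolve_left (by positivity)
    field_simp
    linarith
  have key := Real.sub_sin_lt_sub_mul_sin (Real.arccos_nonneg _) (Real.arccos_le_pi _) hσu
    (div_nonneg ht.le (by linarith)) ((div_lt_one (by linarith)).2 hsinh)
  rw [← Real.two_mul_arccos_sqrt_sub ha.le ha1] at key
  linarith

lemma lt_abs_of_gabFixedEqn {a b u t : ℝ} (ha : 0 < a) (ha1 : a ≤ 1) (ht : 0 < t)
    (h : GabFixedEqn a b u t) : Real.arccos √a - √a * √(1 - a) < |b| := by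
  rcases le_or_gt 0 u with hu | hu
  · exact (lt_of_gabFixedEqn ha ha1 ht hu h).trans_le (le_abs_self b)
  · exact (lt_of_gabFixedEqn ha ha1 ht (by linarith) h.neg).trans_le (neg_le_abs b)

/-- For `t > 0`, `GabFixedEqn a b u t` says `cos u = gabFixCos a t` and
`2 * b = u - t / sinh t * sin u`; `gabFixShift a t` is this value of `2 * b` at
`u = arccos (gabFixCos a t)`. -/
noncomputable def gabFixCos (a t : ℝ) : ℝ := 2 * a * Real.sinh t / t - Real.cosh t

noncomputable def gabFixShift (a t : ℝ) : ℝ :=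
  Real.arccos (gabFixCos a t) - t / Real.sinh t * Real.sin (Real.arccos (gabFixCos a t))

lemma gabFixedEqn_of_cos_eq {a u t : ℝ} (ht : 0 < t) (h : Real.cos u = gabFixCos a t) :
    GabFixedEqn a ((u - t / Real.sinh t * Real.sin u) / 2) u t := by
  have hsinh : 0 < Real.sinh t := Real.sinh_pos_iff.2 ht
  rw [GabFixedEqn, h, gabFixCos]
  constructor <;> field_simp <;> ring

lemma continuousOn_gabFixCos (a : ℝ) : ContinuousOn (gabFixCos a) (Ioi 0) := by
  unfold gabFixCos
  exact ((continuousOn_const.mul Real.continuous_sinh.continuousOn).div continuousOn_id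
    fun t ht => ht.ne').sub Real.continuous_cosh.continuousOn

lemma continuousOn_gabFixShift (a : ℝ) : ContinuousOn (gabFixShift a) (Ioi 0) := by
  have harccos := Real.continuous_arccos.comp_continuousOn (continuousOn_gabFixCos a)
  exact harccos.sub ((continuousOn_id.div Real.continuous_sinh.continuousOn
    fun t ht => (Real.sinh_pos_iff.2 ht).ne').mul (Real.continuous_sin.comp_continuousOn harccos))

lemma tendsto_gabFixCos (a : ℝ) : Tendsto (gabFixCos a) (𝓝[>] 0) (𝓝 (2 * a - 1)) := by
  have hcosh : Tendsto Real.cosh (𝓝[>] 0) (𝓝 1) := by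
    simpa using Real.continuous_cosh.continuousWithinAt.tendsto (x := 0) (s := Ioi 0)
  convert (Real.tendsto_sinh_div_self_nhdsGT.const_mul (2 * a)).sub hcosh using 1
  · ext t; simp [gabFixCos, mul_div_assoc]
  · norm_num

lemma tendsto_gabFixShift (a : ℝ) : Tendsto (gabFixShift a) (𝓝[>] 0)
    (𝓝 (Real.arccos (2 * a - 1) - Real.sin (Real.arccos (2 * a - 1)))) := by
  have harccos := (Real.continuous_arccos.tendsto _).comp (tendsto_gabFixCos a)
  have hdiv : Tendsto (fun t => t / Real.sinh t) (𝓝[>] 0) (𝓝 1) := by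
    simpa using Real.tendsto_sinh_div_self_nhdsGT.inv₀ one_ne_zero
  unfold gabFixShift
  simpa using harccos.sub (hdiv.mul ((Real.continuous_sin.tendsto _).comp harccos))

lemma gabFixCos_two_mul_add_one_lt {a : ℝ} (ha : 0 ≤ a) : gabFixCos a (2 * a + 1) < -1 := by
  have hT : (0 : ℝ) < 2 * a + 1 := by linarith
  have := Real.self_lt_sinh_iff.2 hT
  have := Real.sinh_lt_cosh (2 * a + 1)
  rw [gabFixCos, sub_lt_iff_lt_add, div_lt_iff₀ hT]
  nlinarith

lemma gabFixShift_eq_pi {a t : ℝ} (h : gabFixCos a t ≤ -1) : gabFixShift a t = π := by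
  simp [gabFixShift, Real.arccos_of_le_neg_one h]

lemma gabFixCos_mem_Ioo {a t : ℝ} (h₀ : 0 < gabFixShift a t) (hπ : gabFixShift a t < π) :
    gabFixCos a t ∈ Ioo (-1) 1 := by
  refine ⟨lt_of_not_ge fun h => hπ.ne (gabFixShift_eq_pi h), lt_of_not_ge fun h => h₀.ne' ?_⟩
  simp [gabFixShift, Real.arccos_eq_zero.2 h]

lemma exists_gabFixCos_eq {a c : ℝ} {P : ℝ → Prop} (ha : 0 < a) (hP : ∀ᶠ t in 𝓝[>] 0, P t)
    (hc : -1 ≤ c) (hc' : c < 2 * a - 1) :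
    ∃ t₀ τ, 0 < t₀ ∧ t₀ ≤ τ ∧ P t₀ ∧ gabFixCos a τ = c := by
  have hsmall : ∀ᶠ t in 𝓝[>] 0, t < 2 * a + 1 ∧ 0 < t :=
    (eventually_nhdsWithin_of_eventually_nhds (eventually_lt_nhds (by linarith))).and
      self_mem_nhdsWithin
  obtain ⟨t₀, ht₀c, hP₀, ht₀a, ht₀⟩ :=
    (((tendsto_gabFixCos a).eventually_const_lt hc').and (hP.and hsmall)).exists
  obtain ⟨τ, hτ, hτc⟩ := intermediate_value_Icc' ht₀a.le
    ((continuousOn_gabFixCos a).mono fun t ht => ht₀.trans_le ht.1)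
    ⟨(gabFixCos_two_mul_add_one_lt ha.le).le.trans hc, ht₀c.le⟩
  exact ⟨t₀, τ, ht₀, hτ.1, hP₀, hτc⟩

lemma exists_gabFixedEqn_pi_div_two {a : ℝ} (ha : 0 < a) :
    ∃ u t, 0 < t ∧ GabFixedEqn a (π / 2) u t := by
  obtain ⟨t₀, τ, ht₀, hτ, -, hτc⟩ :=
    exists_gabFixCos_eq (P := fun _ => True) ha (by simp) le_rfl (by linarith)
  refine ⟨π, τ, ht₀.trans_le hτ, ?_⟩
  simpa using gabFixedEqn_of_cos_eq (ht₀.trans_le hτ) (u := π) (by simpa using hτc.symm)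

lemma exists_gabFixedEqn_zero {a : ℝ} (ha : 1 < a) : ∃ u t, 0 < t ∧ GabFixedEqn a 0 u t := by
  obtain ⟨t₀, τ, ht₀, hτ, -, hτc⟩ :=
    exists_gabFixCos_eq (P := fun _ => True) (c := 1) (by linarith) (by simp) (by norm_num)
      (by linarith)
  refine ⟨0, τ, ht₀.trans_le hτ, ?_⟩
  simpa using gabFixedEqn_of_cos_eq (ht₀.trans_le hτ) (u := 0) (by simpa using hτc.symm)

lemma exists_gabFixedEqn_of_lt {a β : ℝ} (ha : 0 < a)
    (hβ : Real.arccos (2 * a - 1) - Real.sin (Real.arccos (2 * a - 1)) < 2 * β)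
    (hβπ : 2 * β < π) :
    ∃ u t, 0 < t ∧ GabFixedEqn a β u t := by
  obtain ⟨t₀, τ, ht₀, hτ, hshift₀, hτc⟩ :=
    exists_gabFixCos_eq ha ((tendsto_gabFixShift a).eventually_lt_const hβ) le_rfl (by linarith)
  have hshiftτ : gabFixShift a τ = π := gabFixShift_eq_pi hτc.le
  obtain ⟨t, htmem, hshift⟩ := intermediate_value_Icc hτ
    ((continuousOn_gabFixShift a).mono fun t ht => ht₀.trans_le ht.1)
    ⟨hshift₀.le, hshiftτ ▸ hβπ.le⟩
  have ht : 0 < t := ht₀.trans_le htmem.1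
  have hβ0 : 0 < 2 * β := by linarith [Real.sin_le (Real.arccos_nonneg (2 * a - 1))]
  have hc := gabFixCos_mem_Ioo (a := a) (t := t) (by linarith) (by linarith)
  refine ⟨Real.arccos (gabFixCos a t), t, ht, ?_⟩
  have := gabFixedEqn_of_cos_eq ht (Real.cos_arccos hc.1.le hc.2.le)
  rwa [← gabFixShift, hshift, mul_div_cancel_left₀ _ two_ne_zero] at this

lemma exists_gabFixedEqn {a b : ℝ} (ha : 0 < a) (hb : |b| ≤ π / 2)
    (hcond : 1 < a ∨ (a ≤ 1 ∧ Real.arccos √a - √a * √(1 - a) < |b|)) :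
    ∃ u t, 0 < t ∧ GabFixedEqn a b u t := by
  suffices h : ∃ u t, 0 < t ∧ GabFixedEqn a |b| u t by
    obtain ⟨u, t, ht, h⟩ := h
    rcases abs_cases b with ⟨hb', -⟩ | ⟨hb', -⟩
    · exact ⟨u, t, ht, hb' ▸ h⟩
    · exact ⟨-u, t, ht, by simpa [hb'] using h.neg⟩
  rcases hb.eq_or_lt with hπ | hπ
  · exact hπ ▸ exists_gabFixedEqn_pi_div_two ha
  by_cases h0 : 1 < a ∧ b = 0
  · simpa [h0.2] using exists_gabFixedEqn_zero h0.1
  refine exists_gabFixedEqn_of_lt ha ?_ (by linarith)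
  rcases hcond with h1 | ⟨h1, hT⟩
  · have hb0 : b ≠ 0 := fun hb0 => h0 ⟨h1, hb0⟩
    rw [Real.arccos_eq_zero.2 (by linarith), Real.sin_zero, sub_zero]
    linarith [abs_pos.2 hb0]
  · rw [← Real.two_mul_arccos_sqrt_sub ha.le h1]
    linarith

theorem exists_attracting_fixedPoint_gab_iff {a b : ℝ} (ha : 0 < a) (hb : |b| ≤ π / 2) :
    (∃ w ∈ upperHalf, gab a b w = w ∧ ‖deriv (gab a b) w‖ < 1) ↔
      1 < a ∨ (a ≤ 1 ∧ Real.arccos √a - √a * √(1 - a) < |b|) := by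
  constructor
  · rintro ⟨w, hw, hfix, -⟩
    rw [← re_add_im w, gab_eq_self_iff (ne_of_gt hw)] at hfix
    rcases le_or_gt a 1 with h1 | h1
    · exact Or.inr ⟨h1, lt_abs_of_gabFixedEqn ha h1 (mul_pos two_pos hw) hfix⟩
    · exact Or.inl h1
  · intro hcond
    obtain ⟨u, t, ht, h⟩ := exists_gabFixedEqn ha hb hcond
    have him : (((u / 2 : ℝ) : ℂ) + (t / 2 : ℝ) * I).im = t / 2 := by simp
    have hfix : gab a b ((u / 2 : ℝ) + (t / 2 : ℝ) * I) = (u / 2 : ℝ) + (t / 2 : ℝ) * I :=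
      (gab_eq_self_iff (by positivity)).2 (by simpa [mul_div_cancel₀] using h)
    refine ⟨_, ?_, hfix, norm_deriv_gab_lt_one ha (by rw [him]; positivity) hfix⟩
    change 0 < Complex.im _
    rw [him]
    positivity

lemma eq_of_sub_eq_int_mul_pi {b b' : ℝ} (hb : b ∈ Ioc (-(π / 2)) (π / 2))
    (hb' : b' ∈ Ioc (-(π / 2)) (π / 2)) {k : ℤ} (h : b - b' = k * π) : b = b' := by
  have hk : |(k : ℝ)| < 1 := by
    have : |b - b'| < π :=
      abs_sub_lt_iff.2 ⟨by linarith [hb.2, hb'.1], by linarith [hb.1, hb'.2]⟩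
    rwa [h, abs_mul, abs_of_pos Real.pi_pos, mul_lt_iff_lt_one_left Real.pi_pos] at this
  obtain rfl : k = 0 := Int.abs_lt_one_iff.1 (by exact_mod_cast hk)
  simpa [sub_eq_zero] using h

lemma affine_conj_gab {a b a' b' l m : ℝ} (hl : 0 < l)
    (h : ∀ z ∈ upperHalf, l * gab a b z + m = gab a' b' (l * z + m)) :
    a' = l * a ∧ b' = l * b + m := by
  have hup : ∀ᶠ z in comap im atTop, z ∈ upperHalf := preimage_mem_comap (Ioi_mem_atTop 0)
  have haffine : Tendsto (fun z : ℂ => l * z + m) (comap im atTop) (comap im atTop) := by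
    refine tendsto_comap_iff.2 ?_
    simpa [Function.comp_def] using tendsto_comap.const_mul_atTop hl
  have hlhs := (((tendsto_tan_comap_im_atTop.const_mul (a : ℂ)).add_const (b : ℂ)).const_mul
    (l : ℂ)).add_const (m : ℂ)
  have hrhs := ((tendsto_tan_comap_im_atTop.comp haffine).const_mul (a' : ℂ)).add_const (b' : ℂ)
  have hlim := tendsto_nhds_unique (hlhs.congr' (hup.mono fun z hz => by simpa [gab] using h z hz))
    hrhs
  have hre : l * b + m = b' := by simpa using congrArg re hlim
  have him : l * a = a' := by simpa using congrArg im hlim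
  exact ⟨him.symm, hre.symm⟩

lemma affine_conj_gab_eq {a b a' b' l m : ℝ} (ha : a ≠ 0) (hl : 0 < l)
    (h : ∀ z ∈ upperHalf, l * gab a b z + m = gab a' b' (l * z + m)) :
    a' = a ∧ ∃ k : ℤ, b - b' = k * π := by
  obtain ⟨rfl, rfl⟩ := affine_conj_gab hl h
  have hI := h I (by simp [upperHalf])
  simp only [gab] at hI
  push_cast at hI
  have htan : tan (l * I + m) = tan I := by
    have : (l : ℂ) * a * (tan (l * I + m) - tan I) = 0 := by linear_combination -hI
    simpa [sub_eq_zero, hl.ne', ha] using this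
  obtain ⟨k, hk⟩ := exists_sub_eq_int_mul_pi_of_tan_eq (by simpa using hl.ne') (by simp) htan
  have hre : m = k * π := by simpa using congrArg re hk
  have him : l - 1 = 0 := by simpa using congrArg im hk
  obtain rfl : l = 1 := by linarith
  exact ⟨one_mul a, -k, by push_cast; linarith⟩

lemma norm_mobius_add_sub_lt {p q r s c : ℝ} {z : ℂ} (hc : c ≠ 0) (hdet : 0 < p * s - q * r)
    (hz : p * s - q * r < (r * z.im) ^ 2) :
    ‖(p * (z + c) + q) / (r * (z + c) + s) - (p * z + q) / (r * z + s)‖ < |c| := by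
  have hrz : 0 < |r * z.im| := abs_pos.2 fun h => by rw [h] at hz; linarith
  have hnorm : ∀ w : ℂ, w.im = z.im → |r * z.im| ≤ ‖r * w + s‖ := fun w hw => by
    simpa [hw] using abs_im_le_norm ((r : ℂ) * w + s)
  have hD₁ := hnorm (z + c) (by simp)
  have hD₂ := hnorm z rfl
  have hD₁0 : (r : ℂ) * (z + c) + s ≠ 0 := norm_pos_iff.1 (hrz.trans_le hD₁)
  have hD₂0 : (r : ℂ) * z + s ≠ 0 := norm_pos_iff.1 (hrz.trans_le hD₂)
  rw [div_sub_div _ _ hD₁0 hD₂0, show ((p : ℂ) * (z + c) + q) * (r * z + s) -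
      (r * (z + c) + s) * (p * z + q) = c * (p * s - q * r : ℝ) by push_cast; ring,
    norm_div, norm_mul, norm_mul, norm_real, norm_real, Real.norm_eq_abs, Real.norm_eq_abs,
    abs_of_pos hdet, div_lt_iff₀ (by positivity)]
  have hprod : (r * z.im) ^ 2 ≤ ‖(r : ℂ) * (z + c) + s‖ * ‖(r : ℂ) * z + s‖ := by
    rw [← sq_abs, sq]
    exact mul_le_mul hD₁ hD₂ hrz.le (norm_nonneg _)
  nlinarith [abs_pos.2 hc]

lemma exists_norm_mobius_add_sub_lt {p q r s c : ℝ} (hr : r ≠ 0) (hc : c ≠ 0)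
    (hdet : 0 < p * s - q * r) : ∃ z ∈ upperHalf,
      ‖(p * (z + c) + q) / (r * (z + c) + s) - (p * z + q) / (r * z + s)‖ < |c| := by
  set Δ := p * s - q * r
  have him : (((Δ + 1) / |r| : ℝ) * I : ℂ).im = (Δ + 1) / |r| := by simp
  refine ⟨((Δ + 1) / |r| : ℝ) * I, ?_, norm_mobius_add_sub_lt hc hdet ?_⟩
  · change 0 < Complex.im _
    rw [him]
    positivity
  · rw [him, mul_div_assoc', div_pow, mul_pow, sq_abs, mul_div_cancel_left₀ _ (pow_ne_zero 2 hr)]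
    nlinarith

lemma pi_le_norm_sub_of_conj_gab {a b a' b' : ℝ} (ha' : 0 < a') {ψ : ℂ → ℂ}
    (hψ : BijOn ψ upperHalf upperHalf)
    (hconj : ∀ z ∈ upperHalf, ψ (gab a b z) = gab a' b' (ψ z))
    {z : ℂ} (hz : z ∈ upperHalf) : π ≤ ‖ψ (z + π) - ψ z‖ := by
  have hzπ : z + π ∈ upperHalf := by simpa [upperHalf] using hz
  have htan : tan (ψ (z + π)) = tan (ψ z) := by
    have hper : gab a b (z + π) = gab a b z := by simp only [gab, tan_periodic z]
    have h : gab a' b' (ψ (z + π)) = gab a' b' (ψ z) := by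
      rw [← hconj _ hzπ, ← hconj z hz, hper]
    simp only [gab, add_left_inj] at h
    exact mul_left_cancel₀ (by exact_mod_cast ha'.ne') h
  obtain ⟨k, hk⟩ :=
    exists_sub_eq_int_mul_pi_of_tan_eq (hψ.mapsTo hzπ).ne' (hψ.mapsTo hz).ne' htan
  have hk0 : k ≠ 0 := by
    rintro rfl
    have := hψ.injOn hzπ hz (by simpa [sub_eq_zero] using hk)
    simp at this
  rw [hk, ← ofReal_intCast, ← ofReal_mul, norm_real, Real.norm_eq_abs, abs_mul,
    abs_of_pos Real.pi_pos]
  have : (1 : ℝ) ≤ |(k : ℝ)| := by exact_mod_cast Int.one_le_abs hk0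
  nlinarith [Real.pi_pos]

theorem not_conj_gab {a b a' b' : ℝ} (ha : 0 < a) (hb : b ∈ Ioc (-(π / 2)) (π / 2))
    (ha' : 0 < a') (hb' : b' ∈ Ioc (-(π / 2)) (π / 2)) (hne : (a, b) ≠ (a', b')) :
    ¬ ∃ ψ : ℂ → ℂ, MobiusH ψ ∧ BijOn ψ upperHalf upperHalf ∧
      ∀ z ∈ upperHalf, ψ (gab a b z) = gab a' b' (ψ z) := by
  rintro ⟨ψ, ⟨p, q, r, s, hdet, hψ⟩, hbij, hconj⟩
  rcases eq_or_ne r 0 with rfl | hr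
  · have hs : s ≠ 0 := by rintro rfl; simp at hdet
    have hl : 0 < p / s := div_pos_iff.2 (mul_pos_iff.1 (by simpa using hdet))
    have h : ∀ z ∈ upperHalf, ((p / s : ℝ) : ℂ) * gab a b z + (q / s : ℝ) =
        gab a' b' ((p / s : ℝ) * z + (q / s : ℝ)) := by
      intro z hz
      have := hconj z hz
      rw [hψ _ (mapsTo_gab ha b hz), hψ z hz] at this
      push_cast
      convert this using 2 <;> field_simp <;> simp
    obtain ⟨rfl, k, hk⟩ := affine_conj_gab_eq ha.ne' hl h
    exact hne (by rw [eq_of_sub_eq_int_mul_pi hb hb' hk])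
  · obtain ⟨z, hz, hlt⟩ := exists_norm_mobius_add_sub_lt hr Real.pi_ne_zero hdet
    have hzπ : z + π ∈ upperHalf := by simpa [upperHalf] using hz
    rw [← hψ _ hzπ, ← hψ _ hz, abs_of_pos Real.pi_pos] at hlt
    linarith [pi_le_norm_sub_of_conj_gab ha' hbij hconj hz]

/-- Proposition 5.3, "Fatou's associates".
In the family `g_{a,b}(z) = a tan z + b` (`a > 0`, `b ∈ (−π/2, π/2]`): no two different
members are conformally conjugate, and `g_{a,b}` has an attracting fixed point in `ℍ` if
and only if `a > 1`, or `a ≤ 1` and `|b| > arccos √a − √a·√(1 − a)`. -/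
theorem statement15 :
    (∀ a b a' b' : ℝ, 0 < a → b ∈ Set.Ioc (-(π / 2)) (π / 2) →
      0 < a' → b' ∈ Set.Ioc (-(π / 2)) (π / 2) → (a, b) ≠ (a', b') →
      ¬ ∃ ψ : ℂ → ℂ, MobiusH ψ ∧ Set.BijOn ψ upperHalf upperHalf ∧
          ∀ z ∈ upperHalf, ψ (gab a b z) = gab a' b' (ψ z)) ∧
    (∀ a b : ℝ, 0 < a → b ∈ Set.Ioc (-(π / 2)) (π / 2) →
      ((∃ w ∈ upperHalf, gab a b w = w ∧ ‖deriv (gab a b) w‖ < 1) ↔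
        (1 < a ∨ (a ≤ 1 ∧
          Real.arccos (Real.sqrt a) - Real.sqrt a * Real.sqrt (1 - a) < |b|)))) := by
  exact ⟨fun _ _ _ _ ha hb ha' hb' hne => not_conj_gab ha hb ha' hb' hne,
      fun _ _ ha hb => exists_attracting_fixedPoint_gab_iff ha (abs_le.2 ⟨hb.1.le, hb.2⟩)⟩
end

section
/- Suppose that (B_n)_{n ∈ ℕ} is a sequence of finite Blaschke products, all of degree d, which converges locally uniformly on 𝔻 to a finite Blaschke product B of degree d. Then the convergence is uniform on all of 𝔻. -/
open Complex Filter Set Metric Topology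
open scoped ENNReal Real Topology

/-! Write each Blaschke product as `μ * ∏ i, mobiusFactor (a i)` with `‖μ‖ = 1`, a point of the
compact parameter space `sphere 0 1 × closedBall 0 1 ^ d`. Along a subsequence the parameters of
`B n` converge to some `(μ₀, α)`, and the pointwise limit identifies `Blim` with the product for
`(μ₀, α)` on the disc. A factor with `‖α i‖ = 1` is constant on the disc, so if a zero escaped to
the circle `Blim` would have fewer than `d` zeros in the disc; comparing numerator polynomials
rules this out. With all `α i` in the open disc, the product depends continuously on the
parameters uniformly for `z` in the closed disc, so the subsequence converges uniformly; as every
subsequence has such a further subsequence, the whole sequence does. -/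

open ComplexConjugate

theorem ContinuousOn.tendstoUniformlyOn_of_isCompact {α β γ : Type*} [UniformSpace α]
    [UniformSpace β] [UniformSpace γ] [LocallyCompactSpace α]
    {f : α → β → γ} {x : α} {U : Set α} {k : Set β} (hxU : U ∈ 𝓝 x) (hk : IsCompact k)
    (hf : ContinuousOn ↿f (U ×ˢ k)) : TendstoUniformlyOn f (f x) (𝓝 x) k := by
  obtain ⟨K, hxK, hKU, hK⟩ := LocallyCompactSpace.local_compact_nhds _ _ hxU
  have := (hK.prod hk).uniformContinuousOn_of_continuous (hf.mono (prod_mono hKU subset_rfl))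
  simpa [nhdsWithin_eq_nhds.2 hxK] using this.tendstoUniformlyOn (mem_of_mem_nhds hxK)

theorem tendstoUniformlyOn_of_forall_subseq {β γ ι : Type*} [UniformSpace γ]
    {l : Filter ι} [l.IsCountablyGenerated] {F : ι → β → γ} {f : β → γ} {s : Set β}
    (h : ∀ φ : ℕ → ι, Tendsto φ atTop l →
      ∃ ψ : ℕ → ℕ, TendstoUniformlyOn (fun n => F (φ (ψ n))) f atTop s) :
    TendstoUniformlyOn F f l s := by
  have key : Tendsto (fun i => UniformOnFun.ofFun {s} (F i)) l
      (𝓝 (UniformOnFun.ofFun {s} f)) := by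
    refine tendsto_of_subseq_tendsto fun φ hφ => (h φ hφ).imp fun ψ hψ => ?_
    rw [UniformOnFun.tendsto_iff_tendstoUniformlyOn]
    rintro _ rfl
    exact hψ
  rw [UniformOnFun.tendsto_iff_tendstoUniformlyOn] at key
  exact key s rfl

theorem TendstoUniformlyOn.comp_tendsto {α β ι ι' : Type*} [UniformSpace β]
    {F : ι → α → β} {f : α → β} {l : Filter ι} {s : Set α}
    (h : TendstoUniformlyOn F f l s) {l' : Filter ι'} {φ : ι' → ι} (hφ : Tendsto φ l' l) :
    TendstoUniformlyOn (fun n => F (φ n)) f l' s :=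
  fun u hu => hφ.eventually (h u hu)

noncomputable def mobiusFactor (a z : ℂ) : ℂ := (a - z) / (1 - conj a * z)

theorem one_sub_conj_mul_ne_zero {a z : ℂ} (h : ‖a‖ * ‖z‖ < 1) : 1 - conj a * z ≠ 0 := by
  refine sub_ne_zero.2 fun h1 => h.ne ?_
  simpa using congrArg (‖·‖) h1.symm

theorem continuousAt_mobiusFactor {a z : ℂ} (h : 1 - conj a * z ≠ 0) :
    ContinuousAt (fun p : ℂ × ℂ => mobiusFactor p.1 p.2) (a, z) := by
  unfold mobiusFactor
  exact ContinuousAt.div (by fun_prop) (by fun_prop) h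

theorem mobiusFactor_of_norm_eq_one {a z : ℂ} (ha : ‖a‖ = 1) (h : 1 - conj a * z ≠ 0) :
    mobiusFactor a z = a := by
  have : a * conj a = 1 := by simp [Complex.mul_conj, Complex.normSq_eq_norm_sq, ha]
  rw [mobiusFactor, div_eq_iff h]
  linear_combination z * this

theorem blaschkeFactor_eq_mul_mobiusFactor (a z : ℂ) :
    blaschkeFactor a z = (if a = 0 then -1 else (‖a‖ : ℂ) / a) * mobiusFactor a z := by
  by_cases ha : a = 0 <;> simp [blaschkeFactor, mobiusFactor, ha]

noncomputable def blaschkeProd {ι : Type*} [Fintype ι] (p : ℂ × (ι → ℂ)) (z : ℂ) : ℂ :=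
  p.1 * ∏ i, mobiusFactor (p.2 i) z

theorem IsFiniteBlaschke.exists_eq_blaschkeProd {d : ℕ} {g : ℂ → ℂ}
    (h : IsFiniteBlaschke d g) :
    ∃ p ∈ sphere (0 : ℂ) 1 ×ˢ univ.pi fun _ : Fin d => ball (0 : ℂ) 1, g = blaschkeProd p := by
  classical
  obtain ⟨θ, a, ha, hg⟩ := h
  refine ⟨(exp (θ * I) * ∏ i, if a i = 0 then -1 else (‖a i‖ : ℂ) / a i, a),
    ⟨?_, fun i _ => by simpa using ha i⟩, funext fun z => ?_⟩
  · have hunit : ∀ i, ‖if a i = 0 then (-1 : ℂ) else (‖a i‖ : ℂ) / a i‖ = 1 := by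
      intro i
      split_ifs with h0 <;> simp [h0]
    simp [norm_prod, hunit]
  · simp only [hg, blaschkeProd, blaschkeFactor_eq_mul_mobiusFactor, Finset.prod_mul_distrib,
      mul_assoc]

theorem continuousAt_blaschkeProd {ι : Type*} [Fintype ι] {p : ℂ × (ι → ℂ)} {z : ℂ}
    (h : ∀ i, 1 - conj (p.2 i) * z ≠ 0) : ContinuousAt ↿(blaschkeProd (ι := ι)) (p, z) := by
  show ContinuousAt (fun x : (ℂ × (ι → ℂ)) × ℂ => x.1.1 * ∏ i, mobiusFactor (x.1.2 i) x.2) (p, z)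
  refine continuousAt_fst.fst.mul (tendsto_finsetProd _ fun i _ => ?_)
  exact (continuousAt_mobiusFactor (h i)).comp (x := (p, z))
    (f := fun q : (ℂ × (ι → ℂ)) × ℂ => (q.1.2 i, q.2)) (by fun_prop)

theorem tendstoUniformlyOn_blaschkeProd {ι : Type*} [Fintype ι] {p : ℂ × (ι → ℂ)}
    (hp : ∀ i, ‖p.2 i‖ < 1) :
    TendstoUniformlyOn blaschkeProd (blaschkeProd p) (𝓝 p) (closedBall 0 1) := by
  have hU : IsOpen {q : ℂ × (ι → ℂ) | ∀ i, ‖q.2 i‖ < 1} := by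
    simp only [ofPred_forall]
    exact isOpen_iInter_of_finite fun i => isOpen_lt (by fun_prop) continuous_const
  refine ContinuousOn.tendstoUniformlyOn_of_isCompact (hU.mem_nhds hp) (isCompact_closedBall 0 1)
    fun w hw => (continuousAt_blaschkeProd fun i => one_sub_conj_mul_ne_zero ?_).continuousWithinAt
  have hz : ‖w.2‖ ≤ 1 := by simpa using hw.2
  calc ‖w.1.2 i‖ * ‖w.2‖ ≤ ‖w.1.2 i‖ := mul_le_of_le_one_right (norm_nonneg _) hz
    _ < 1 := hw.1 i

open Polynomial in
theorem mobiusFactor_eq_eval_div_eval (a z : ℂ) :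
    mobiusFactor a z = (X - C a).eval z / (C (conj a) * X - 1).eval z := by
  rw [mobiusFactor, ← neg_div_neg_eq]
  simp

open Polynomial in
theorem card_le_card_of_eqOn_prod_mobiusFactor {ι κ : Type*} {s : Finset ι} {t : Finset κ}
    {a : ι → ℂ} {b : κ → ℂ} (ha : ∀ i ∈ s, ‖a i‖ < 1) (hb : ∀ j ∈ t, ‖b j‖ ≤ 1) {c c' : ℂ}
    (hc' : c' ≠ 0)
    (h : EqOn (fun z => c * ∏ i ∈ s, mobiusFactor (a i) z)
      (fun z => c' * ∏ j ∈ t, mobiusFactor (b j) z) (ball 0 1)) :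
    s.card ≤ t.card := by
  have hden {a z : ℂ} (h : ‖a‖ * ‖z‖ < 1) : (C (conj a) * X - 1).eval z ≠ 0 := by
    simpa [neg_sub] using neg_ne_zero.2 (one_sub_conj_mul_ne_zero h)
  have hpoly : C c * (∏ i ∈ s, (X - C (a i))) * ∏ j ∈ t, (C (conj (b j)) * X - 1)
      = C c' * (∏ j ∈ t, (X - C (b j))) * ∏ i ∈ s, (C (conj (a i)) * X - 1) := by
    refine eq_of_infinite_eval_eq _ _
      ((infinite_of_mem_nhds 0 (ball_mem_nhds 0 one_pos)).mono fun z hz => ?_)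
    have hz1 : ‖z‖ < 1 := by simpa using hz
    have hdena : ∏ i ∈ s, (C (conj (a i)) * X - 1).eval z ≠ 0 :=
      Finset.prod_ne_zero_iff.2 fun i hi => hden ((mul_le_of_le_one_left (norm_nonneg _)
        (ha i hi).le).trans_lt hz1)
    have hdenb : ∏ j ∈ t, (C (conj (b j)) * X - 1).eval z ≠ 0 :=
      Finset.prod_ne_zero_iff.2 fun j hj => hden ((mul_le_of_le_one_left (norm_nonneg _)
        (hb j hj)).trans_lt hz1)
    have := h hz
    simp only [mobiusFactor_eq_eval_div_eval, Finset.prod_div_distrib] at this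
    field_simp at this
    simp only [Set.mem_ofPred_eq, eval_mul, eval_prod, eval_C]
    linear_combination this
  -- The zeros `a i` lie in the disc, the zeros `1 / conj (a j)` of the denominators outside it.
  have hcop : IsCoprime (∏ i ∈ s, (X - C (a i))) (C c' * ∏ i ∈ s, (C (conj (a i)) * X - 1)) := by
    refine (isCoprime_mul_unit_left_right (isUnit_C.2 hc'.isUnit) _ _).2
      (IsCoprime.prod_left fun i hi => IsCoprime.prod_right fun j hj => ?_)
    refine (irreducible_X_sub_C _).coprime_iff_not_dvd.2 ?_
    rw [dvd_iff_isRoot]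
    exact hden (mul_lt_one_of_nonneg_of_lt_one_left (norm_nonneg _) (ha j hj) (ha i hi).le)
  have hdvd : ∏ i ∈ s, (X - C (a i)) ∣ ∏ j ∈ t, (X - C (b j)) :=
    hcop.dvd_of_dvd_mul_right ⟨C c * ∏ j ∈ t, (C (conj (b j)) * X - 1), by
      linear_combination -hpoly⟩
  simpa using natDegree_le_of_dvd hdvd (monic_prod_X_sub_C _ _).ne_zero

theorem norm_lt_one_of_eqOn_blaschkeProd {ι : Type*} [Fintype ι] {p q : ℂ × (ι → ℂ)}
    (hq : ∀ i, ‖q.2 i‖ < 1) (hp₁ : p.1 ≠ 0) (hp : ∀ i, ‖p.2 i‖ ≤ 1)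
    (h : EqOn (blaschkeProd q) (blaschkeProd p) (ball 0 1)) (i : ι) : ‖p.2 i‖ < 1 := by
  classical
  set S := Finset.univ.filter fun i => ‖p.2 i‖ < 1
  have hcirc : ∀ i ∈ Finset.univ.filter fun i => ¬ ‖p.2 i‖ < 1, ‖p.2 i‖ = 1 := fun i hi =>
    (hp i).antisymm (not_lt.1 (Finset.mem_filter.1 hi).2)
  -- On the disc, a factor whose zero lies on the circle is the constant `mobiusFactor a z = a`.
  have hsplit : EqOn (blaschkeProd p) (fun z => (p.1 * ∏ i ∈ Finset.univ.filter
      fun i => ¬ ‖p.2 i‖ < 1, p.2 i) * ∏ i ∈ S, mobiusFactor (p.2 i) z) (ball 0 1) := by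
    intro z hz
    have hz1 : ‖z‖ < 1 := by simpa using hz
    rw [blaschkeProd, ← Finset.prod_filter_mul_prod_filter_not Finset.univ
      fun i => ‖p.2 i‖ < 1, Finset.prod_congr rfl fun i hi => mobiusFactor_of_norm_eq_one
        (hcirc i hi) (one_sub_conj_mul_ne_zero (by rwa [hcirc i hi, one_mul]))]
    ring
  have hne : p.1 * ∏ i ∈ Finset.univ.filter (fun i => ¬ ‖p.2 i‖ < 1), p.2 i ≠ 0 :=
    mul_ne_zero hp₁ <| Finset.prod_ne_zero_iff.2 fun i hi h0 => by simpa [h0] using hcirc i hi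
  have hcard := card_le_card_of_eqOn_prod_mobiusFactor (fun i _ => hq i)
    (fun i hi => (Finset.mem_filter.1 hi).2.le) hne (h.trans hsplit)
  have hS : S = Finset.univ := Finset.eq_univ_of_card S (le_antisymm (Finset.card_le_univ S) hcard)
  have hi : i ∈ S := hS ▸ Finset.mem_univ i
  exact (Finset.mem_filter.1 hi).2

/-- Proposition 8.1, "Fatou's associates".
If a sequence of finite Blaschke products of degree `d` converges locally uniformly on
`𝔻` to a finite Blaschke product of degree `d`, then the convergence is uniform
on `𝔻`. -/
theorem statement19 (d : ℕ) (B : ℕ → ℂ → ℂ) (Blim : ℂ → ℂ)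
    (hB : ∀ n, IsFiniteBlaschke d (B n)) (hlim : IsFiniteBlaschke d Blim)
    (hconv : TendstoLocallyUniformlyOn B Blim atTop unitDisc) :
    TendstoUniformlyOn B Blim atTop unitDisc := by
  obtain ⟨q, ⟨-, hq⟩, rfl⟩ := hlim.exists_eq_blaschkeProd
  choose p hp hBp using fun n => (hB n).exists_eq_blaschkeProd
  obtain rfl : B = fun n => blaschkeProd (p n) := funext hBp
  have hK : IsCompact (sphere (0 : ℂ) 1 ×ˢ univ.pi fun _ : Fin d => closedBall (0 : ℂ) 1) :=
    (isCompact_sphere 0 1).prod (isCompact_univ_pi fun _ => isCompact_closedBall 0 1)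
  refine tendstoUniformlyOn_of_forall_subseq fun φ hφ => ?_
  obtain ⟨p₀, ⟨hp₀₁, hp₀⟩, ψ, hψ, hpψ⟩ := hK.tendsto_subseq fun n =>
    prod_mono subset_rfl (pi_mono fun _ _ => ball_subset_closedBall) (hp (φ n))
  replace hp₀ : ∀ i, ‖p₀.2 i‖ ≤ 1 := fun i => by simpa using hp₀ i (mem_univ i)
  have hlim₀ : EqOn (blaschkeProd q) (blaschkeProd p₀) unitDisc := by
    intro z hz
    have hz1 : ‖z‖ < 1 := by simpa [unitDisc] using hz
    refine tendsto_nhds_unique ((hconv.tendsto_at hz).comp (hφ.comp hψ.tendsto_atTop)) ?_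
    refine (continuousAt_blaschkeProd fun i => one_sub_conj_mul_ne_zero ?_).tendsto.comp
      (hpψ.prodMk_nhds tendsto_const_nhds)
    exact (mul_le_of_le_one_left (norm_nonneg z) (hp₀ i)).trans_lt hz1
  have hp₀' := norm_lt_one_of_eqOn_blaschkeProd (fun i => by simpa using hq i (mem_univ i))
    (by rintro h; simp [h] at hp₀₁) hp₀ hlim₀
  exact ⟨ψ, (((tendstoUniformlyOn_blaschkeProd hp₀').comp_tendsto hpψ).mono
    ball_subset_closedBall).congr_right hlim₀.symm⟩
end
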